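/- arXiv:2109.11975 — 7 statements merged into one kernel-verified Lean document; each statement's English description precedes it below -/
import Mathlib

section
/- The Adler map H_V(u,v) = (v - (p-q)/(u+v), u + (p-q)/(u+v)), defined on pairs of elements of a field (where u+v ≠ 0), satisfies the Yang-Baxter relation R₁₂ ∘ R₁₃ ∘ R₂₃ = R₂₃ ∘ R₁₃ ∘ R₁₂ with parameters p, q, r attached to the three factors. -/
/-- The Adler map with parameters (a,b). -/
def adlerR {K : Type*} [Field K] (a b : K) (t : K × K) : K × K :=
  (t.2 - (a - b) / (t.1 + t.2), t.1 + (a - b) / (t.1 + t.2))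

def adlerR12 {K : Type*} [Field K] (a b : K) (t : K × K × K) : K × K × K :=
  ((adlerR a b (t.1, t.2.1)).1, (adlerR a b (t.1, t.2.1)).2, t.2.2)

def adlerR13 {K : Type*} [Field K] (a b : K) (t : K × K × K) : K × K × K :=
  ((adlerR a b (t.1, t.2.2)).1, t.2.1, (adlerR a b (t.1, t.2.2)).2)

def adlerR23 {K : Type*} [Field K] (a b : K) (t : K × K × K) : K × K × K :=
  (t.1, adlerR a b (t.2.1, t.2.2))

/-!
The Adler map preserves the sum of its arguments, so both sides of the Yang–Baxter relation
preserve `u + v + w` and it suffices to compare first and third components. Put `s = u + v`,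
`t = v + w`, `A = s t - (p - q)` and `B = s t + (q - r)`. The second map applied sees the sum
`B / t` on the left side and `A / s` on the right, the third one `t A / B` and `s B / A`. Both
first components come out as `w - (p - r) s / A` and both third components as
`u + (p - r) t / B`, in two of the four cases after the identity
`(q - r) A + (p - q) B = (p - r) s t`.
-/

def sum3 {M : Type*} [Add M] (t : M × M × M) : M := t.1 + t.2.1 + t.2.2

theorem Prod.ext_of_sum3 {M : Type*} [AddCancelMonoid M] {x y : M × M × M}
    (h₁ : x.1 = y.1) (h₃ : x.2.2 = y.2.2) (hs : sum3 x = sum3 y) : x = y := by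
  refine Prod.ext h₁ (Prod.ext ?_ h₃)
  rw [sum3, sum3, h₁, h₃] at hs
  exact add_left_cancel (add_right_cancel hs)

section

variable {K : Type*} [Field K]

def adlerR123 (p q r : K) (t : K × K × K) : K × K × K :=
  adlerR12 p q (adlerR13 p r (adlerR23 q r t))

def adlerR321 (p q r : K) (t : K × K × K) : K × K × K :=
  adlerR23 q r (adlerR13 p r (adlerR12 p q t))

theorem adlerR_fst_add_snd (a b : K) (t : K × K) :
    (adlerR a b t).1 + (adlerR a b t).2 = t.1 + t.2 := by
  simp only [adlerR]; ring

theorem sum3_adlerR12 (a b : K) (t : K × K × K) : sum3 (adlerR12 a b t) = sum3 t := by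
  simp only [sum3, adlerR12]; linear_combination adlerR_fst_add_snd a b (t.1, t.2.1)

theorem sum3_adlerR13 (a b : K) (t : K × K × K) : sum3 (adlerR13 a b t) = sum3 t := by
  simp only [sum3, adlerR13]; linear_combination adlerR_fst_add_snd a b (t.1, t.2.2)

theorem sum3_adlerR23 (a b : K) (t : K × K × K) : sum3 (adlerR23 a b t) = sum3 t := by
  simp only [sum3, adlerR23]; linear_combination adlerR_fst_add_snd a b (t.2.1, t.2.2)

theorem sum3_adlerR123 (p q r : K) (t : K × K × K) : sum3 (adlerR123 p q r t) = sum3 t := by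
  rw [adlerR123, sum3_adlerR12, sum3_adlerR13, sum3_adlerR23]

theorem sum3_adlerR321 (p q r : K) (t : K × K × K) : sum3 (adlerR321 p q r t) = sum3 t := by
  rw [adlerR321, sum3_adlerR23, sum3_adlerR13, sum3_adlerR12]

theorem adlerR_of_add_eq_div (a b : K) {x y n d : K} (h : x + y = n / d) :
    adlerR a b (x, y) = (y - (a - b) * d / n, x + (a - b) * d / n) := by
  simp only [adlerR, h, div_div_eq_mul_div]

theorem adlerR_fst_add {x y : K} (a b z : K) (hxy : x + y ≠ 0) :
    (adlerR a b (x, y)).1 + z = ((x + y) * (y + z) - (a - b)) / (x + y) := by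
  simp only [adlerR]; field_simp; ring

theorem add_adlerR_snd {y z : K} (a b x : K) (hyz : y + z ≠ 0) :
    x + (adlerR a b (y, z)).2 = ((x + y) * (y + z) + (a - b)) / (y + z) := by
  simp only [adlerR]; field_simp; ring

theorem adler_key_identity (p q r s t : K) :
    (q - r) * (s * t - (p - q)) + (p - q) * (s * t + (q - r)) = (p - r) * (s * t) := by
  ring

variable {p q r u v w : K}

theorem adlerR123_fst (ht : v + w ≠ 0) (hA : (u + v) * (v + w) - (p - q) ≠ 0)
    (hB : (u + v) * (v + w) + (q - r) ≠ 0) :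
    (adlerR123 p q r (u, v, w)).1 = w - (p - r) * (u + v) / ((u + v) * (v + w) - (p - q)) := by
  simp only [adlerR123, adlerR12, adlerR13, adlerR23]
  rw [adlerR_of_add_eq_div p r (add_adlerR_snd q r u ht)]
  have h : (adlerR q r (v, w)).2 - (p - r) * (v + w) / ((u + v) * (v + w) + (q - r))
      + (adlerR q r (v, w)).1
      = (v + w) * ((u + v) * (v + w) - (p - q)) / ((u + v) * (v + w) + (q - r)) := by
    rw [sub_add_eq_add_sub, add_comm, adlerR_fst_add_snd, eq_div_iff hB, sub_mul,
      div_mul_cancel₀ _ hB]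
    ring
  rw [adlerR_of_add_eq_div p q h]
  simp only [adlerR]
  have key := adler_key_identity p q r (u + v) (v + w)
  generalize (u + v) * (v + w) - (p - q) = A at hA key ⊢
  generalize (u + v) * (v + w) + (q - r) = B at hB key ⊢
  field_simp
  linear_combination -key

theorem adlerR123_snd_snd (ht : v + w ≠ 0) :
    (adlerR123 p q r (u, v, w)).2.2 = u + (p - r) * (v + w) / ((u + v) * (v + w) + (q - r)) := by
  simp only [adlerR123, adlerR12, adlerR13, adlerR23]
  rw [adlerR_of_add_eq_div p r (add_adlerR_snd q r u ht)]

theorem adlerR321_fst (hs : u + v ≠ 0) :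
    (adlerR321 p q r (u, v, w)).1 = w - (p - r) * (u + v) / ((u + v) * (v + w) - (p - q)) := by
  simp only [adlerR321, adlerR12, adlerR13, adlerR23]
  rw [adlerR_of_add_eq_div p r (adlerR_fst_add p q w hs)]

theorem adlerR321_snd_snd (hs : u + v ≠ 0) (hA : (u + v) * (v + w) - (p - q) ≠ 0)
    (hB : (u + v) * (v + w) + (q - r) ≠ 0) :
    (adlerR321 p q r (u, v, w)).2.2 = u + (p - r) * (v + w) / ((u + v) * (v + w) + (q - r)) := by
  simp only [adlerR321, adlerR12, adlerR13, adlerR23]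
  rw [adlerR_of_add_eq_div p r (adlerR_fst_add p q w hs)]
  have h : (adlerR p q (u, v)).2 + ((adlerR p q (u, v)).1 + (p - r) * (u + v) /
      ((u + v) * (v + w) - (p - q)))
      = (u + v) * ((u + v) * (v + w) + (q - r)) / ((u + v) * (v + w) - (p - q)) := by
    rw [← add_assoc, add_comm (adlerR p q (u, v)).2, adlerR_fst_add_snd, eq_div_iff hA, add_mul,
      div_mul_cancel₀ _ hA]
    ring
  rw [adlerR_of_add_eq_div q r h]
  simp only [adlerR]
  have key := adler_key_identity p q r (u + v) (v + w)
  generalize (u + v) * (v + w) - (p - q) = A at hA key ⊢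
  generalize (u + v) * (v + w) + (q - r) = B at hB key ⊢
  field_simp
  linear_combination key

theorem adlerR123_eq_adlerR321 (hs : u + v ≠ 0) (ht : v + w ≠ 0)
    (hA : (u + v) * (v + w) - (p - q) ≠ 0) (hB : (u + v) * (v + w) + (q - r) ≠ 0) :
    adlerR123 p q r (u, v, w) = adlerR321 p q r (u, v, w) :=
  Prod.ext_of_sum3 (by rw [adlerR123_fst ht hA hB, adlerR321_fst hs])
    (by rw [adlerR123_snd_snd ht, adlerR321_snd_snd hs hA hB])
    (by rw [sum3_adlerR123, sum3_adlerR321])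

end

theorem adler_yang_baxter_general {K : Type*} [Field K] (p q r u v w : K)
    (h1 : v + w ≠ 0)
    (h2 : (adlerR23 q r (u, v, w)).1 + (adlerR23 q r (u, v, w)).2.2 ≠ 0)
    (h4 : u + v ≠ 0)
    (h5 : (adlerR12 p q (u, v, w)).1 + (adlerR12 p q (u, v, w)).2.2 ≠ 0) :
    adlerR12 p q (adlerR13 p r (adlerR23 q r (u, v, w)))
      = adlerR23 q r (adlerR13 p r (adlerR12 p q (u, v, w))) := by
  have hB : (u + v) * (v + w) + (q - r) ≠ 0 := by
    have h : u + (adlerR q r (v, w)).2 ≠ 0 := h2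
    exact (div_ne_zero_iff.mp (add_adlerR_snd q r u h1 ▸ h)).1
  have hA : (u + v) * (v + w) - (p - q) ≠ 0 := by
    have h : (adlerR p q (u, v)).1 + w ≠ 0 := h5
    exact (div_ne_zero_iff.mp (adlerR_fst_add p q w h4 ▸ h)).1
  exact adlerR123_eq_adlerR321 h4 h1 hA hB

/-- The Adler map satisfies the parametric Yang-Baxter relation. -/
theorem adler_yang_baxter {K : Type*} [Field K] (p q r u v w : K)
    (h1 : v + w ≠ 0)
    (h2 : (adlerR23 q r (u, v, w)).1 + (adlerR23 q r (u, v, w)).2.2 ≠ 0)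
    (h3 : (adlerR13 p r (adlerR23 q r (u, v, w))).1
        + (adlerR13 p r (adlerR23 q r (u, v, w))).2.1 ≠ 0)
    (h4 : u + v ≠ 0)
    (h5 : (adlerR12 p q (u, v, w)).1 + (adlerR12 p q (u, v, w)).2.2 ≠ 0)
    (h6 : (adlerR13 p r (adlerR12 p q (u, v, w))).2.1
        + (adlerR13 p r (adlerR12 p q (u, v, w))).2.2 ≠ 0) :
    adlerR12 p q (adlerR13 p r (adlerR23 q r (u, v, w)))
      = adlerR23 q r (adlerR13 p r (adlerR12 p q (u, v, w))) :=
  adler_yang_baxter_general p q r u v w h1 h2 h4 h5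
end

section
/- If φ: X → X is a symmetry of a Yang-Baxter map R: X × X → X × X (i.e., (φ × φ) ∘ R = R ∘ (φ × φ) and φ is a bijection), then the map R̂ = (φ⁻¹ × id) ∘ R ∘ (id × φ) is also a Yang-Baxter map. -/
/-!
Write `Φᵢ` for `φ` acting on the `i`-th factor of `X³`, so that the twisted map acts on factors
`i < j` as `R̂ᵢⱼ = Φᵢ⁻¹ ∘ Rᵢⱼ ∘ Φⱼ`. Each `Rᵢⱼ` commutes with `Φₖ` for `k ∉ {i, j}` and, by the
symmetry, with `Φᵢ ∘ Φⱼ`. Using these commutations, all `Φ`'s in either side of the Yang–Baxter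
relation for `R̂` can be moved outwards, and both sides become
`(Φ₁⁻² ∘ Φ₂⁻¹) ∘ (the same side for R) ∘ (Φ₂ ∘ Φ₃²)`.
-/

def ybR12 {X : Type*} (R : X × X → X × X) (t : X × X × X) : X × X × X :=
  ((R (t.1, t.2.1)).1, (R (t.1, t.2.1)).2, t.2.2)

def ybR13 {X : Type*} (R : X × X → X × X) (t : X × X × X) : X × X × X :=
  ((R (t.1, t.2.2)).1, t.2.1, (R (t.1, t.2.2)).2)

def ybR23 {X : Type*} (R : X × X → X × X) (t : X × X × X) : X × X × X :=
  (t.1, R (t.2.1, t.2.2))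

def IsYangBaxter {X : Type*} (R : X × X → X × X) : Prop :=
  ybR12 R ∘ ybR13 R ∘ ybR23 R = ybR23 R ∘ ybR13 R ∘ ybR12 R

section Twist

variable {X : Type*} {R : X × X → X × X} {φ : X ≃ X}

def twist (φ : X ≃ X) (R : X × X → X × X) : X × X → X × X :=
  Prod.map φ.symm id ∘ R ∘ Prod.map id φ

theorem apply_mk_right_of_commute (hφ : Function.Commute (Prod.map φ φ) R) (u v : X) :
    R (u, φ v) = Prod.map φ φ (R (φ.symm u, v)) := by
  simpa using (hφ (φ.symm u, v)).symm

theorem twist_ybR12_ybR13_ybR23 (hφ : Function.Commute (Prod.map φ φ) R) :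
    ybR12 (twist φ R) ∘ ybR13 (twist φ R) ∘ ybR23 (twist φ R) =
      Prod.map (φ.symm ∘ φ.symm) (Prod.map φ.symm id) ∘
        (ybR12 R ∘ ybR13 R ∘ ybR23 R) ∘ Prod.map id (Prod.map φ (φ ∘ φ)) := by
  funext ⟨a, b, c⟩
  simp [ybR12, ybR13, ybR23, twist, apply_mk_right_of_commute hφ]

theorem twist_ybR23_ybR13_ybR12 (hφ : Function.Commute (Prod.map φ φ) R) :
    ybR23 (twist φ R) ∘ ybR13 (twist φ R) ∘ ybR12 (twist φ R) =
      Prod.map (φ.symm ∘ φ.symm) (Prod.map φ.symm id) ∘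
        (ybR23 R ∘ ybR13 R ∘ ybR12 R) ∘ Prod.map id (Prod.map φ (φ ∘ φ)) := by
  funext ⟨a, b, c⟩
  simp [ybR12, ybR13, ybR23, twist, apply_mk_right_of_commute hφ]

theorem IsYangBaxter.twist (hR : IsYangBaxter R) (hφ : Function.Commute (Prod.map φ φ) R) :
    IsYangBaxter (twist φ R) := by
  rw [IsYangBaxter, twist_ybR12_ybR13_ybR23 hφ, twist_ybR23_ybR13_ybR12 hφ, hR]

end Twist

/-- If φ is a symmetry of a Yang-Baxter map R, then
    (φ⁻¹ × id) ∘ R ∘ (id × φ) is also a Yang-Baxter map. -/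
theorem yangBaxter_twist_by_symmetry {X : Type*} (R : X × X → X × X) (φ : X ≃ X)
    (hR : IsYangBaxter R)
    (hsym : (fun t : X × X => (φ t.1, φ t.2)) ∘ R
          = R ∘ (fun t : X × X => (φ t.1, φ t.2))) :
    IsYangBaxter ((fun t : X × X => (φ.symm t.1, t.2)) ∘ R ∘
      (fun t : X × X => (t.1, φ t.2))) :=
  hR.twist fun t => congrFun hsym t
end

section
/- Let D be a division ring and λ a central element of D. For the non-abelian Adler companion map c𝓗_V: (x¹,x²,v¹,v²) ↦ (u¹,u²,y¹,y²) given by u¹ = (v¹(v¹−x¹) + v²v¹ − x²x¹)(x¹−v¹)⁻¹, u² = (v¹−x¹)x²x¹((v¹+x²)x¹ − (v¹+v²)v¹)⁻¹, y¹ = (x¹(x¹−v¹) + x²x¹ − v²v¹)(v¹−x¹)⁻¹, y² = (x¹−v¹)v²v¹((x¹+v²)v¹ − (x¹+x²)x¹)⁻¹, the Lax equation L(u¹,u²;λ)·L(v¹,v²;λ) = L(y¹,y²;λ)·L(x¹,x²;λ) holds, where L(x¹,x²;λ) is the 2×2 matrix with entries [[x¹, (x¹+x²)x¹ − λ], [1,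 x¹]]. -/
/-!
Put `p = x¹ - v¹` and `w = (v²v¹ - x²x¹) p⁻¹`, so that `u¹ = w - v¹` and `y¹ = w - x¹`. The
denominators of `u²` and `y²` are `(v¹ - w) p` and `(w - x¹) p`, hence `u²u¹ p = p x²x¹` and
`y²y¹ p = p v²v¹`. In a product `L(a,b) L(a',b')` the second row depends only on `a + a'` and
`a'a' + b'a' + aa'`, which agree on both sides because `w p = v²v¹ - x²x¹`; the first row then
reduces to `u²u¹ + p w = y²y¹` (true after right multiplication by `p`) and `u²u¹ p = p x²x¹`.
-/

/-- The Lax matrix of the non-abelian Adler companion map. -/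
def laxHV {D : Type*} [DivisionRing D] (x1 x2 l : D) : Matrix (Fin 2) (Fin 2) D :=
  !![x1, (x1 + x2) * x1 - l; 1, x1]

section LaxProduct

variable {D : Type*} [DivisionRing D]

theorem laxHV_mul_laxHV {l : D} (hl : l ∈ Set.center D) (a b a' b' : D) :
    laxHV a b l * laxHV a' b' l =
      !![a * (a + a') + b * a - l, a * (a' * a' + b' * a' + a * a') + b * a * a' - l * (a + a');
        a + a', a' * a' + b' * a' + a * a' - l] := by
  have hal : l * a = a * l := (Set.mem_center_iff.mp hl).comm a
  rw [laxHV, laxHV, Matrix.mul_fin_two]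
  simp only [Matrix.of.apply_eq_iff_eq, Matrix.vecCons_inj, and_true]
  refine ⟨⟨?_, ?_⟩, ?_, ?_⟩
  · noncomm_ring
  · linear_combination (norm := noncomm_ring) hal
  · noncomm_ring
  · noncomm_ring

theorem laxHV_mul_laxHV_eq {l v1 v2 x1 x2 w b d : D} (hl : l ∈ Set.center D)
    (hp : x1 - v1 ≠ 0) (hw : w * (x1 - v1) = v2 * v1 - x2 * x1)
    (hb : b * (w - v1) * (x1 - v1) = (x1 - v1) * (x2 * x1))
    (hd : d * (w - x1) * (x1 - v1) = (x1 - v1) * (v2 * v1)) :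
    laxHV (w - v1) b l * laxHV v1 v2 l = laxHV (w - x1) d l * laxHV x1 x2 l := by
  have hm : v1 * v1 + v2 * v1 + (w - v1) * v1 = x1 * x1 + x2 * x1 + (w - x1) * x1 := by
    linear_combination (norm := noncomm_ring) hw.symm
  have hbd : b * (w - v1) + (x1 - v1) * w = d * (w - x1) := by
    refine mul_right_cancel₀ hp ?_
    rw [add_mul, hb, hd, mul_assoc, hw]
    noncomm_ring
  rw [laxHV_mul_laxHV hl, laxHV_mul_laxHV hl, hm, ← hbd]
  simp only [Matrix.of.apply_eq_iff_eq, Matrix.vecCons_inj, sub_add_cancel, and_true]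
  constructor
  · noncomm_ring
  · linear_combination (norm := noncomm_ring) -hb

end LaxProduct

/-- The Lax equation for the non-abelian Adler companion map c𝓗_V. -/
theorem cHV_lax_equation {D : Type*} [DivisionRing D] (l x1 x2 v1 v2 : D)
    (hl : l ∈ Set.center D)
    (h1 : x1 - v1 ≠ 0)
    (h2 : (v1 + x2) * x1 - (v1 + v2) * v1 ≠ 0)
    (h3 : (x1 + v2) * v1 - (x1 + x2) * x1 ≠ 0) :
    laxHV ((v1 * (v1 - x1) + v2 * v1 - x2 * x1) * (x1 - v1)⁻¹)
          ((v1 - x1) * x2 * x1 * ((v1 + x2) * x1 - (v1 + v2) * v1)⁻¹) l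
      * laxHV v1 v2 l
    = laxHV ((x1 * (x1 - v1) + x2 * x1 - v2 * v1) * (v1 - x1)⁻¹)
            ((x1 - v1) * v2 * v1 * ((x1 + v2) * v1 - (x1 + x2) * x1)⁻¹) l
      * laxHV x1 x2 l := by
  set w := (v2 * v1 - x2 * x1) * (x1 - v1)⁻¹
  have hw : w * (x1 - v1) = v2 * v1 - x2 * x1 := inv_mul_cancel_right₀ h1 _
  have hu1 : (v1 * (v1 - x1) + v2 * v1 - x2 * x1) * (x1 - v1)⁻¹ = w - v1 := by
    rw [mul_inv_eq_iff_eq_mul₀ h1]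
    linear_combination (norm := noncomm_ring) hw.symm
  have hy1 : (x1 * (x1 - v1) + x2 * x1 - v2 * v1) * (v1 - x1)⁻¹ = w - x1 := by
    rw [mul_inv_eq_iff_eq_mul₀ (sub_ne_zero.mpr (sub_ne_zero.mp h1).symm)]
    linear_combination (norm := noncomm_ring) hw
  have hu2 : (v1 - x1) * x2 * x1 * ((v1 + x2) * x1 - (v1 + v2) * v1)⁻¹ * (w - v1) * (x1 - v1)
      = (x1 - v1) * (x2 * x1) := by
    have hden : (w - v1) * (x1 - v1) = -((v1 + x2) * x1 - (v1 + v2) * v1) := by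
      linear_combination (norm := noncomm_ring) hw
    rw [mul_assoc, hden, mul_neg, inv_mul_cancel_right₀ h2]
    noncomm_ring
  have hy2 : (x1 - v1) * v2 * v1 * ((x1 + v2) * v1 - (x1 + x2) * x1)⁻¹ * (w - x1) * (x1 - v1)
      = (x1 - v1) * (v2 * v1) := by
    have hden : (w - x1) * (x1 - v1) = (x1 + v2) * v1 - (x1 + x2) * x1 := by
      linear_combination (norm := noncomm_ring) hw
    rw [mul_assoc, hden, inv_mul_cancel_right₀ h3, mul_assoc]
  rw [hu1, hy1]
  exact laxHV_mul_laxHV_eq hl h1 hw hu2 hy2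
end

section
/- The map φ: (z¹,z²) ↦ (−z¹,−z²) is a symmetry of the non-abelian map c𝓗_V, i.e., (φ × φ) ∘ c𝓗_V = c𝓗_V ∘ (φ × φ). -/
/-- The non-abelian Adler companion map c𝓗_V. -/
def cHV {D : Type*} [DivisionRing D] (t : D × D × D × D) : D × D × D × D :=
  let x1 := t.1; let x2 := t.2.1; let v1 := t.2.2.1; let v2 := t.2.2.2
  ((v1 * (v1 - x1) + v2 * v1 - x2 * x1) * (x1 - v1)⁻¹,
   (v1 - x1) * x2 * x1 * ((v1 + x2) * x1 - (v1 + v2) * v1)⁻¹,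
   (x1 * (x1 - v1) + x2 * x1 - v2 * v1) * (v1 - x1)⁻¹,
   (x1 - v1) * v2 * v1 * ((x1 + v2) * v1 - (x1 + x2) * x1)⁻¹)

/- Each component is (homogeneous of degree d) * (homogeneous of degree e)⁻¹ with d - e = 1,
and `(-a)⁻¹ = -a⁻¹` holds in any division ring (also at `a = 0`), so every component is odd. -/
theorem cHV_neg {D : Type*} [DivisionRing D] (t : D × D × D × D) : cHV (-t) = -cHV t := by
  obtain ⟨x1, x2, v1, v2⟩ := t
  have hinv : (v1 - x1)⁻¹ = -(x1 - v1)⁻¹ := by rw [← inv_neg, neg_sub]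
  simp only [cHV, Prod.neg_mk, neg_sub_neg, ← neg_add, neg_mul_neg, hinv, Prod.mk.injEq]
  refine ⟨?_, ?_, ?_, ?_⟩ <;> noncomm_ring

theorem cHV_neg_symmetry_general {D : Type*} [DivisionRing D] (x1 x2 v1 v2 : D) :
    cHV (-x1, -x2, -v1, -v2)
      = (-(cHV (x1, x2, v1, v2)).1, -(cHV (x1, x2, v1, v2)).2.1,
         -(cHV (x1, x2, v1, v2)).2.2.1, -(cHV (x1, x2, v1, v2)).2.2.2) :=
  cHV_neg (x1, x2, v1, v2)

/-- φ : (z¹,z²) ↦ (−z¹,−z²) is a symmetry of c𝓗_V. -/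
theorem cHV_neg_symmetry {D : Type*} [DivisionRing D] (x1 x2 v1 v2 : D)
    (h1 : x1 - v1 ≠ 0)
    (h2 : (v1 + x2) * x1 - (v1 + v2) * v1 ≠ 0)
    (h3 : (x1 + v2) * v1 - (x1 + x2) * x1 ≠ 0) :
    cHV (-x1, -x2, -v1, -v2)
      = (-(cHV (x1, x2, v1, v2)).1, -(cHV (x1, x2, v1, v2)).2.1,
         -(cHV (x1, x2, v1, v2)).2.2.1, -(cHV (x1, x2, v1, v2)).2.2.2) :=
  cHV_neg_symmetry_general x1 x2 v1 v2
end

section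
/- In a commutative field, the non-abelian map c𝓗_V preserves the products of the two components of each point: if c𝓗_V(x¹,x²,v¹,v²) = (u¹,u²,y¹,y²), then u²u¹ = x²x¹ and y²y¹ = v²v¹. -/
/-! The denominator of `u²` is minus the numerator of `u¹`, so `u² = x²x¹ / u¹`. Swapping the
roles of `x` and `v` turns `(u¹, u²)` into `(y¹, y²)`, so the same computation gives `y²y¹ = v²v¹`. -/

namespace CHV

variable {K : Type*} [Field K]

def u1 (x1 x2 v1 v2 : K) : K := (v1 * (v1 - x1) + v2 * v1 - x2 * x1) * (x1 - v1)⁻¹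

def u2 (x1 x2 v1 v2 : K) : K :=
  (v1 - x1) * x2 * x1 * ((v1 + x2) * x1 - (v1 + v2) * v1)⁻¹

theorem u2_mul_u1 {x1 x2 v1 v2 : K} (hxv : x1 - v1 ≠ 0)
    (hden : (v1 + x2) * x1 - (v1 + v2) * v1 ≠ 0) :
    u2 x1 x2 v1 v2 * u1 x1 x2 v1 v2 = x2 * x1 := by
  set n := v1 * (v1 - x1) + v2 * v1 - x2 * x1
  have hden_eq : (v1 + x2) * x1 - (v1 + v2) * v1 = -n := by ring
  have hn : n ≠ 0 := neg_ne_zero.mp (hden_eq ▸ hden)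
  rw [u1, u2, hden_eq]
  field_simp
  ring

end CHV

/-- In the commutative setting, c𝓗_V preserves the products of the two
components of each point. -/
theorem cHV_product_invariants {K : Type*} [Field K] (x1 x2 v1 v2 u1 u2 y1 y2 : K)
    (h1 : x1 - v1 ≠ 0)
    (h2 : (v1 + x2) * x1 - (v1 + v2) * v1 ≠ 0)
    (h3 : (x1 + v2) * v1 - (x1 + x2) * x1 ≠ 0)
    (hu1 : u1 = (v1 * (v1 - x1) + v2 * v1 - x2 * x1) * (x1 - v1)⁻¹)
    (hu2 : u2 = (v1 - x1) * x2 * x1 * ((v1 + x2) * x1 - (v1 + v2) * v1)⁻¹)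
    (hy1 : y1 = (x1 * (x1 - v1) + x2 * x1 - v2 * v1) * (v1 - x1)⁻¹)
    (hy2 : y2 = (x1 - v1) * v2 * v1 * ((x1 + v2) * v1 - (x1 + x2) * x1)⁻¹) :
    u2 * u1 = x2 * x1 ∧ y2 * y1 = v2 * v1 := by
  subst hu1 hu2 hy1 hy2
  exact ⟨CHV.u2_mul_u1 h1 h2, CHV.u2_mul_u1 (sub_ne_zero.mpr (sub_ne_zero.mp h1).symm) h3⟩
end

section
/- Let K be a field and p, q ∈ K. The map F_V: (u,v) ↦ (x,y) with x = v + (p−q)/(u−v), y = u + (p−q)/(u−v) (defined when u ≠ v) satisfies the parametric Yang-Baxter relation R₁₂ ∘ R₁₃ ∘ R₂₃ = R₂₃ ∘ R₁₃ ∘ R₁₂ on K³ with parameters p, q, r, assuming all denominators encountered are nonzero. -/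
/-- The map F_V with parameters (a,b). -/
def FVR {K : Type*} [Field K] (a b : K) (t : K × K) : K × K :=
  (t.2 + (a - b) / (t.1 - t.2), t.1 + (a - b) / (t.1 - t.2))

def FVR12 {K : Type*} [Field K] (a b : K) (t : K × K × K) : K × K × K :=
  ((FVR a b (t.1, t.2.1)).1, (FVR a b (t.1, t.2.1)).2, t.2.2)

def FVR13 {K : Type*} [Field K] (a b : K) (t : K × K × K) : K × K × K :=
  ((FVR a b (t.1, t.2.2)).1, t.2.1, (FVR a b (t.1, t.2.2)).2)

def FVR23 {K : Type*} [Field K] (a b : K) (t : K × K × K) : K × K × K :=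
  (t.1, FVR a b (t.2.1, t.2.2))

/-! `FVR a b` is the swap `(u, v) ↦ (v, u)` followed by adding the shift `(a - b) / (u - v)` to
both coordinates. So both sides of the Yang–Baxter relation send `(u, v, w)` to `(w, v, u)` plus
accumulated shifts, and on each side the shift of the middle coordinate is the sum of the other two.
Writing `α = u - v`, `β = v - w`, `P = p - q`, `Q = q - r` (so `p - r = P + Q`), the relation
reduces to two rational identities in these quantities, comparing the shifts of the first and of the
third coordinate. -/

section

variable {K : Type*} [Field K]

lemma fv_yang_baxter_shift_first (α β P Q : K) (hα : α ≠ 0) (hβ : β ≠ 0)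
    (hA : α - Q / β ≠ 0) (hB : β + P / α ≠ 0) :
    Q / β + P / (β + (P + Q) / (α - Q / β)) = (P + Q) / (β + P / α) := by
  set A := α - Q / β
  set B := β + P / α
  have hβA : β * A = α * β - Q := by rw [mul_sub, mul_div_cancel₀ _ hβ, mul_comm]
  have hαB : α * B = α * β + P := by rw [mul_add, mul_div_cancel₀ _ hα]
  have hden : β + (P + Q) / A = α * B / A := by
    rw [add_div' _ _ _ hA]
    congr 1
    linear_combination hβA - hαB
  rw [hden, div_div_eq_mul_div, div_add_div _ _ hβ (mul_ne_zero hα hB),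
    div_eq_div_iff (mul_ne_zero hβ (mul_ne_zero hα hB)) hB]
  linear_combination Q * B * hαB + P * B * hβA

lemma fv_yang_baxter_shift_third (α β P Q : K) (hα : α ≠ 0) (hβ : β ≠ 0)
    (hA : α - Q / β ≠ 0) (hB : β + P / α ≠ 0) :
    (P + Q) / (α - Q / β) = P / α + Q / (α - (P + Q) / (β + P / α)) := by
  set A := α - Q / β
  set B := β + P / α
  have hβA : β * A = α * β - Q := by rw [mul_sub, mul_div_cancel₀ _ hβ, mul_comm]
  have hαB : α * B = α * β + P := by rw [mul_add, mul_div_cancel₀ _ hα]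
  have hden : α - (P + Q) / B = β * A / B := by
    rw [sub_div' hB]
    congr 1
    linear_combination hαB - hβA
  rw [hden, div_div_eq_mul_div, div_add_div _ _ hα (mul_ne_zero hβ hA),
    div_eq_div_iff hA (mul_ne_zero hα (mul_ne_zero hβ hA))]
  linear_combination -(P * A) * hβA - Q * A * hαB

end

theorem FV_yang_baxter_general {K : Type*} [Field K] (p q r u v w : K)
    (h1 : v - w ≠ 0)
    (h2 : (FVR23 q r (u, v, w)).1 - (FVR23 q r (u, v, w)).2.2 ≠ 0)
    (h4 : u - v ≠ 0)
    (h5 : (FVR12 p q (u, v, w)).1 - (FVR12 p q (u, v, w)).2.2 ≠ 0) :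
    FVR12 p q (FVR13 p r (FVR23 q r (u, v, w)))
      = FVR23 q r (FVR13 p r (FVR12 p q (u, v, w))) := by
  have hA : (u - v) - (q - r) / (v - w) ≠ 0 := by
    convert h2 using 1; simp only [FVR23, FVR]; ring
  have hB : (v - w) + (p - q) / (u - v) ≠ 0 := by
    convert h5 using 1; simp only [FVR12, FVR]; ring
  have first := fv_yang_baxter_shift_first _ _ _ _ h4 h1 hA hB
  have third := fv_yang_baxter_shift_third _ _ _ _ h4 h1 hA hB
  simp only [FVR12, FVR13, FVR23, FVR]
  refine Prod.ext ?_ (Prod.ext ?_ ?_)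
  · linear_combination first
  · linear_combination first + third
  · linear_combination third

/-- F_V satisfies the parametric Yang-Baxter relation. -/
theorem FV_yang_baxter {K : Type*} [Field K] (p q r u v w : K)
    (h1 : v - w ≠ 0)
    (h2 : (FVR23 q r (u, v, w)).1 - (FVR23 q r (u, v, w)).2.2 ≠ 0)
    (h3 : (FVR13 p r (FVR23 q r (u, v, w))).1
        - (FVR13 p r (FVR23 q r (u, v, w))).2.1 ≠ 0)
    (h4 : u - v ≠ 0)
    (h5 : (FVR12 p q (u, v, w)).1 - (FVR12 p q (u, v, w)).2.2 ≠ 0)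
    (h6 : (FVR13 p r (FVR12 p q (u, v, w))).2.1
        - (FVR13 p r (FVR12 p q (u, v, w))).2.2 ≠ 0) :
    FVR12 p q (FVR13 p r (FVR23 q r (u, v, w)))
      = FVR23 q r (FVR13 p r (FVR12 p q (u, v, w))) :=
  FV_yang_baxter_general p q r u v w h1 h2 h4 h5
end

section
/- Let K be a field, p, q ∈ K, and u, v ∈ K with uv + p ≠ 0 and uv + q ≠ 0. The map Λ_III: (u,v) ↦ (x,y) with x = v(uv+p)/(uv+q), y = u(uv+q)/(uv+p) satisfies x·y = u·v, and satisfies the parametric Yang-Baxter relation R₁₂ ∘ R₁₃ ∘ R₂₃ = R₂₃ ∘ R₁₃ ∘ R₁₂ on K³ with parameters p, q, r, assuming all denominators encountered are nonzero. -/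
/-!
Applying `R^{a,b}` to a pair whose product is `n / d` multiplies its coordinates by
`(n + a d) / (n + b d)` and by the inverse ratio, and preserves the product. Hence both sides
of the Yang–Baxter relation are computed by tracking `s = u v` and `t = v w` alone. With
`A = s(t+r) + p(t+q)`, `B = s(t+r) + r(t+q)`, `C = t(s+p) + p(s+q)`, `D = t(s+p) + r(s+q)`,
the factorizations `t A + p B = (t+r) C`, `t A + q B = (t+q) D`, `s D + q C = (s+q) A` and
`s D + r C = (s+p) B` collapse both sides to `(w C / D, v A D / (B C), u B / A)`.
-/

/-- The map Λ_III with parameters (a,b). -/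
def LIIIR {K : Type*} [Field K] (a b : K) (t : K × K) : K × K :=
  (t.2 * (t.1 * t.2 + a) / (t.1 * t.2 + b), t.1 * (t.1 * t.2 + b) / (t.1 * t.2 + a))

def LIIIR12 {K : Type*} [Field K] (a b : K) (t : K × K × K) : K × K × K :=
  ((LIIIR a b (t.1, t.2.1)).1, (LIIIR a b (t.1, t.2.1)).2, t.2.2)

def LIIIR13 {K : Type*} [Field K] (a b : K) (t : K × K × K) : K × K × K :=
  ((LIIIR a b (t.1, t.2.2)).1, t.2.1, (LIIIR a b (t.1, t.2.2)).2)

def LIIIR23 {K : Type*} [Field K] (a b : K) (t : K × K × K) : K × K × K :=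
  (t.1, LIIIR a b (t.2.1, t.2.2))

namespace LIIIR

variable {K : Type*} [Field K]

theorem fst_mul_snd {a b x y : K} (ha : x * y + a ≠ 0) (hb : x * y + b ≠ 0) :
    (LIIIR a b (x, y)).1 * (LIIIR a b (x, y)).2 = x * y := by
  simp only [LIIIR]
  rw [div_mul_div_comm, div_eq_iff (mul_ne_zero hb ha)]
  ring

theorem apply_of_mul_eq_div {a b x y n d : K} (hd : d ≠ 0) (h : x * y = n / d) :
    LIIIR a b (x, y) = (y * ((n + a * d) / (n + b * d)), x * ((n + b * d) / (n + a * d))) := by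
  simp only [LIIIR, h, mul_div_assoc, div_add' _ _ _ hd, div_div_div_cancel_right₀ hd]

theorem mul_snd_add_ne_zero_iff {a b y z : K} (x c : K) (h : y * z + a ≠ 0) :
    x * (LIIIR a b (y, z)).2 + c ≠ 0 ↔ x * y * (y * z + b) + c * (y * z + a) ≠ 0 := by
  simp only [LIIIR]
  rw [mul_div_assoc', div_add' _ _ _ h, div_ne_zero_iff, and_iff_left h, ← mul_assoc]

theorem fst_mul_add_ne_zero_iff {a b x y : K} (z c : K) (h : x * y + b ≠ 0) :
    (LIIIR a b (x, y)).1 * z + c ≠ 0 ↔ y * z * (x * y + a) + c * (x * y + b) ≠ 0 := by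
  simp only [LIIIR]
  rw [div_mul_eq_mul_div, div_add' _ _ _ h, div_ne_zero_iff, and_iff_left h, mul_right_comm y]

def yangBaxterValue (p q r u v w : K) : K × K × K :=
  let s := u * v
  let t := v * w
  (w * ((t * (s + p) + p * (s + q)) / (t * (s + p) + r * (s + q))),
   v * ((s * (t + r) + p * (t + q)) / (s * (t + r) + r * (t + q))
     * ((t * (s + p) + r * (s + q)) / (t * (s + p) + p * (s + q)))),
   u * ((s * (t + r) + r * (t + q)) / (s * (t + r) + p * (t + q))))

theorem yangBaxter_lhs_eq {p q r u v w : K} (hq : u * v + q ≠ 0)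
    (htq : v * w + q ≠ 0) (htr : v * w + r ≠ 0) (hB : u * (LIIIR q r (v, w)).2 + r ≠ 0)
    (hC : (LIIIR p q (u, v)).1 * w + p ≠ 0) (hD : (LIIIR p q (u, v)).1 * w + r ≠ 0) :
    LIIIR12 p q (LIIIR13 p r (LIIIR23 q r (u, v, w))) = yangBaxterValue p q r u v w := by
  replace hB := (mul_snd_add_ne_zero_iff _ _ htq).1 hB
  replace hC := (fst_mul_add_ne_zero_iff _ _ hq).1 hC
  replace hD := (fst_mul_add_ne_zero_iff _ _ hq).1 hD
  simp only [LIIIR12, LIIIR13, LIIIR23, yangBaxterValue]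
  set s := u * v
  set t := v * w
  set A := s * (t + r) + p * (t + q)
  set B := s * (t + r) + r * (t + q)
  set C := t * (s + p) + p * (s + q)
  set D := t * (s + p) + r * (s + q)
  have hfac_p : t * A + p * B = (t + r) * C := by ring
  have hfac_q : t * A + q * B = (t + q) * D := by ring
  have step1 : LIIIR q r (v, w) = (w * (t + q) / (t + r), v * (t + r) / (t + q)) := rfl
  have step2 : LIIIR p r (u, v * (t + r) / (t + q)) =
      (v * (t + r) / (t + q) * (A / B), u * (B / A)) :=
    apply_of_mul_eq_div htq (by ring)
  have step3 : LIIIR p q (v * (t + r) / (t + q) * (A / B), w * (t + q) / (t + r)) =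
      (w * (t + q) / (t + r) * ((t + r) * C / ((t + q) * D)),
        v * (t + r) / (t + q) * (A / B) * ((t + q) * D / ((t + r) * C))) := by
    rw [apply_of_mul_eq_div hB (n := t * A) (by field_simp; ring), hfac_p, hfac_q]
  rw [step1, step2, step3]
  refine Prod.ext ?_ (Prod.ext ?_ ?_) <;> dsimp only <;> field_simp

theorem yangBaxter_rhs_eq {p q r u v w : K} (hp : u * v + p ≠ 0) (hq : u * v + q ≠ 0)
    (htq : v * w + q ≠ 0) (hA : u * (LIIIR q r (v, w)).2 + p ≠ 0)
    (hB : u * (LIIIR q r (v, w)).2 + r ≠ 0) (hC : (LIIIR p q (u, v)).1 * w + p ≠ 0) :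
    LIIIR23 q r (LIIIR13 p r (LIIIR12 p q (u, v, w))) = yangBaxterValue p q r u v w := by
  replace hA := (mul_snd_add_ne_zero_iff _ _ htq).1 hA
  replace hB := (mul_snd_add_ne_zero_iff _ _ htq).1 hB
  replace hC := (fst_mul_add_ne_zero_iff _ _ hq).1 hC
  simp only [LIIIR12, LIIIR13, LIIIR23, yangBaxterValue]
  set s := u * v
  set t := v * w
  set A := s * (t + r) + p * (t + q)
  set B := s * (t + r) + r * (t + q)
  set C := t * (s + p) + p * (s + q)
  set D := t * (s + p) + r * (s + q)
  have hfac_q : s * D + q * C = (s + q) * A := by ring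
  have hfac_r : s * D + r * C = (s + p) * B := by ring
  have step1 : LIIIR p q (u, v) = (v * (s + p) / (s + q), u * (s + q) / (s + p)) := rfl
  have step2 : LIIIR p r (v * (s + p) / (s + q), w) =
      (w * (C / D), v * (s + p) / (s + q) * (D / C)) :=
    apply_of_mul_eq_div hq (by ring)
  have step3 : LIIIR q r (u * (s + q) / (s + p), v * (s + p) / (s + q) * (D / C)) =
      (v * (s + p) / (s + q) * (D / C) * ((s + q) * A / ((s + p) * B)),
        u * (s + q) / (s + p) * ((s + p) * B / ((s + q) * A))) := by
    rw [apply_of_mul_eq_div hC (n := s * D) (by field_simp; ring), hfac_q, hfac_r]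
  rw [step1, step2, step3]
  refine Prod.ext ?_ (Prod.ext ?_ ?_) <;> dsimp only <;> field_simp

end LIIIR

theorem Lambda_III_yang_baxter_general {K : Type*} [Field K] (p q r u v w : K)
    (hp1 : u * v + p ≠ 0) (hq1 : u * v + q ≠ 0)
    (h1a : v * w + q ≠ 0) (h1b : v * w + r ≠ 0)
    (h2a : (LIIIR23 q r (u, v, w)).1 * (LIIIR23 q r (u, v, w)).2.2 + p ≠ 0)
    (h2b : (LIIIR23 q r (u, v, w)).1 * (LIIIR23 q r (u, v, w)).2.2 + r ≠ 0)
    (h5a : (LIIIR12 p q (u, v, w)).1 * (LIIIR12 p q (u, v, w)).2.2 + p ≠ 0)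
    (h5b : (LIIIR12 p q (u, v, w)).1 * (LIIIR12 p q (u, v, w)).2.2 + r ≠ 0) :
    (v * (u * v + p) / (u * v + q)) * (u * (u * v + q) / (u * v + p)) = u * v ∧
    LIIIR12 p q (LIIIR13 p r (LIIIR23 q r (u, v, w)))
      = LIIIR23 q r (LIIIR13 p r (LIIIR12 p q (u, v, w))) :=
  ⟨LIIIR.fst_mul_snd hp1 hq1,
    (LIIIR.yangBaxter_lhs_eq hq1 h1a h1b h2b h5a h5b).trans
      (LIIIR.yangBaxter_rhs_eq hp1 hq1 h1a h2a h2b h5a).symm⟩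

/-- Λ_III preserves the product and satisfies the parametric Yang-Baxter
relation. -/
theorem Lambda_III_yang_baxter {K : Type*} [Field K] (p q r u v w : K)
    (hp1 : u * v + p ≠ 0) (hq1 : u * v + q ≠ 0)
    (h1a : v * w + q ≠ 0) (h1b : v * w + r ≠ 0)
    (h2a : (LIIIR23 q r (u, v, w)).1 * (LIIIR23 q r (u, v, w)).2.2 + p ≠ 0)
    (h2b : (LIIIR23 q r (u, v, w)).1 * (LIIIR23 q r (u, v, w)).2.2 + r ≠ 0)
    (h3a : (LIIIR13 p r (LIIIR23 q r (u, v, w))).1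
         * (LIIIR13 p r (LIIIR23 q r (u, v, w))).2.1 + p ≠ 0)
    (h3b : (LIIIR13 p r (LIIIR23 q r (u, v, w))).1
         * (LIIIR13 p r (LIIIR23 q r (u, v, w))).2.1 + q ≠ 0)
    (h5a : (LIIIR12 p q (u, v, w)).1 * (LIIIR12 p q (u, v, w)).2.2 + p ≠ 0)
    (h5b : (LIIIR12 p q (u, v, w)).1 * (LIIIR12 p q (u, v, w)).2.2 + r ≠ 0)
    (h6a : (LIIIR13 p r (LIIIR12 p q (u, v, w))).2.1
         * (LIIIR13 p r (LIIIR12 p q (u, v, w))).2.2 + q ≠ 0)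
    (h6b : (LIIIR13 p r (LIIIR12 p q (u, v, w))).2.1
         * (LIIIR13 p r (LIIIR12 p q (u, v, w))).2.2 + r ≠ 0) :
    (v * (u * v + p) / (u * v + q)) * (u * (u * v + q) / (u * v + p)) = u * v ∧
    LIIIR12 p q (LIIIR13 p r (LIIIR23 q r (u, v, w)))
      = LIIIR23 q r (LIIIR13 p r (LIIIR12 p q (u, v, w))) :=
  Lambda_III_yang_baxter_general p q r u v w hp1 hq1 h1a h1b h2a h2b h5a h5b
end
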